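/- There exists a constant C > 0 with the following property. For every M ≥ 1 with h = 1/M, every Δt > 0, every grid function d : (ℤ/Mℤ)³ → ℝ³ with |d_i| = 1 for all i, and all grid functions w, w₁, w₂ : (ℤ/Mℤ)³ → ℝ³, one has ‖∇_h (V_{Δt}((w + w₁)/2) d) − ∇_h (V_{Δt}((w + w₂)/2) d)‖ ≤ (C Δt / h) ‖w₁ − w₂‖, where V_{Δt}((w + w_j)/2) d denotes the grid function i ↦ V_{Δt}((w_i + (w_j)_i)/2) d_i and the norms are discrete L² norms. -/

import Mathlib

noncomputable section
open scoped BigOperators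

/-- Euclidean norm on ℝ³. -/
def enorm3 (v : Fin 3 → ℝ) : ℝ := Real.sqrt (∑ i, v i ^ 2)

/-- Squared Euclidean norm on ℝ³. -/
def sq3 (v : Fin 3 → ℝ) : ℝ := ∑ i, v i ^ 2

/-- The propagation matrix `V_τ(w)` applied to a vector `v`. -/
def Vmat (τ : ℝ) (w v : Fin 3 → ℝ) : Fin 3 → ℝ :=
  (1 + τ ^ 2 / 4 * sq3 w)⁻¹ •
    ((1 - τ ^ 2 / 4 * sq3 w) • v + (τ ^ 2 / 2 * ∑ i, w i * v i) • w
      + τ • crossProduct v w)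

/-- Backward difference `D⁻_j` of a periodic grid function on `(ℤ/Mℤ)³`. -/
def Dm {M : ℕ} (h : ℝ) (u : (Fin 3 → ZMod M) → Fin 3 → ℝ) (j : Fin 3)
    (i : Fin 3 → ZMod M) : Fin 3 → ℝ :=
  h⁻¹ • (u i - u (i - Pi.single j 1))

/-- Discrete L² norm: `‖u‖ = (h³ Σ_i |u(i)|²)^(1/2)`. -/
def l2norm {M : ℕ} [NeZero M] (h : ℝ) (u : (Fin 3 → ZMod M) → Fin 3 → ℝ) : ℝ :=
  Real.sqrt (h ^ 3 * ∑ i, ∑ k, u i k ^ 2)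

/-- Discrete L² norm of the backward gradient:
`‖∇_h u‖ = (h³ Σ_i Σ_j |D⁻_j u(i)|²)^(1/2)`. -/
def gradnorm {M : ℕ} [NeZero M] (h : ℝ) (u : (Fin 3 → ZMod M) → Fin 3 → ℝ) : ℝ :=
  Real.sqrt (h ^ 3 * ∑ i, ∑ j, ∑ k, Dm h u j i k ^ 2)


/-! `V_τ(w)` is the Cayley transform of the skew matrix `(τ/2) Q(w)`, so `x = V_τ(w) d` satisfies
`x - d = (τ/2) (x + d) × w`; dotting with `x + d` gives `|x| = |d|`. For `x = V_τ(a) d` and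
`y = V_τ(b) d`, subtracting the two relations gives `z - (τ/2) z × a = (τ/2) (y + d) × (a - b)`
for `z = x - y`, and since `z ⊥ z × a` this yields `|z| ≤ (τ/2) |y + d| |a - b| ≤ τ |d| |a - b|`,
uniformly in the size of `a` and `b`. Backward differences cost at most a factor `2√3/h` in the
discrete L² norm, so `C = √3` works. -/

open Matrix

lemma sq3_eq_dotProduct (v : Fin 3 → ℝ) : sq3 v = v ⬝ᵥ v := by
  simp only [sq3, dotProduct, sq]

lemma sq3_nonneg (v : Fin 3 → ℝ) : 0 ≤ sq3 v := by
  unfold sq3; positivity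

lemma sq3_smul (c : ℝ) (v : Fin 3 → ℝ) : sq3 (c • v) = c ^ 2 * sq3 v := by
  simp only [sq3_eq_dotProduct, smul_dotProduct, dotProduct_smul, smul_eq_mul]; ring

lemma sq3_add_add_sq3_sub (v w : Fin 3 → ℝ) :
    sq3 (v + w) + sq3 (v - w) = 2 * sq3 v + 2 * sq3 w := by
  simp only [sq3_eq_dotProduct, add_dotProduct, dotProduct_add, sub_dotProduct, dotProduct_sub,
    dotProduct_comm w v]
  ring

lemma sq3_add_le (v w : Fin 3 → ℝ) : sq3 (v + w) ≤ 2 * sq3 v + 2 * sq3 w := by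
  linarith [sq3_add_add_sq3_sub v w, sq3_nonneg (v - w)]

lemma sq3_sub_le (v w : Fin 3 → ℝ) : sq3 (v - w) ≤ 2 * sq3 v + 2 * sq3 w := by
  linarith [sq3_add_add_sq3_sub v w, sq3_nonneg (v + w)]

lemma sq3_cross_le (v w : Fin 3 → ℝ) : sq3 (v ⨯₃ w) ≤ sq3 v * sq3 w := by
  rw [sq3_eq_dotProduct, cross_dot_cross, sq3_eq_dotProduct, sq3_eq_dotProduct, dotProduct_comm w v]
  nlinarith [sq_nonneg (v ⬝ᵥ w)]

lemma sq3_le_sq3_sub_smul_cross (c : ℝ) (z a : Fin 3 → ℝ) : sq3 z ≤ sq3 (z - c • z ⨯₃ a) := by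
  have h : sq3 (z - c • z ⨯₃ a) = sq3 z + c ^ 2 * sq3 (z ⨯₃ a) := by
    rw [← sq3_smul]
    simp only [sq3_eq_dotProduct, sub_dotProduct, dotProduct_sub, smul_dotProduct, dotProduct_smul,
      dot_self_cross, dotProduct_comm _ z, smul_eq_mul]
    ring
  rw [h]
  nlinarith [sq3_nonneg (z ⨯₃ a), sq_nonneg c]

-- `V_τ(w) = (I - (τ/2) Q(w))⁻¹ (I + (τ/2) Q(w))` is a Cayley transform; this is that
-- identity with the inverse cleared.
lemma Vmat_sub_self (τ : ℝ) (w v : Fin 3 → ℝ) :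
    Vmat τ w v - v = (τ / 2) • (Vmat τ w v + v) ⨯₃ w := by
  have hα : 1 + τ ^ 2 / 4 * sq3 w ≠ 0 := by have := sq3_nonneg w; positivity
  simp only [Vmat, sq3, Fin.sum_univ_three] at hα ⊢
  simp_rw [cross_apply]
  ext i
  fin_cases i <;>
  · simp only [Fin.isValue, Fin.reduceFinMk, cons_val, Pi.add_apply, Pi.sub_apply,
      Pi.smul_apply, smul_eq_mul]
    field_simp
    ring

lemma sq3_Vmat (τ : ℝ) (w v : Fin 3 → ℝ) : sq3 (Vmat τ w v) = sq3 v := by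
  have h := congrArg ((Vmat τ w v + v) ⬝ᵥ ·) (Vmat_sub_self τ w v)
  rw [dotProduct_smul, dot_self_cross, smul_zero, dotProduct_sub, add_dotProduct,
    add_dotProduct, dotProduct_comm v (Vmat τ w v)] at h
  rw [sq3_eq_dotProduct, sq3_eq_dotProduct]
  linarith

lemma sq3_Vmat_sub_Vmat_le (τ : ℝ) (a b d : Fin 3 → ℝ) :
    sq3 (Vmat τ a d - Vmat τ b d) ≤ τ ^ 2 * sq3 d * sq3 (a - b) := by
  set x := Vmat τ a d
  set y := Vmat τ b d
  have hx := Vmat_sub_self τ a d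
  have hy := Vmat_sub_self τ b d
  have key : (x - y) - (τ / 2) • (x - y) ⨯₃ a = (τ / 2) • (y + d) ⨯₃ (a - b) := by
    calc (x - y) - (τ / 2) • (x - y) ⨯₃ a
        = (x - d) - (y - d) - (τ / 2) • ((x + d) - (y + d)) ⨯₃ a := by abel_nf
      _ = (τ / 2) • (y + d) ⨯₃ (a - b) := by
        rw [hx, hy]
        simp only [map_sub, LinearMap.sub_apply]
        module
  have hyd : sq3 (y + d) ≤ 4 * sq3 d := by
    linarith [sq3_add_le y d, sq3_Vmat τ b d]
  calc sq3 (x - y) ≤ sq3 ((x - y) - (τ / 2) • (x - y) ⨯₃ a) := sq3_le_sq3_sub_smul_cross _ _ _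
    _ = (τ / 2) ^ 2 * sq3 ((y + d) ⨯₃ (a - b)) := by rw [key, sq3_smul]
    _ ≤ (τ / 2) ^ 2 * (4 * sq3 d * sq3 (a - b)) := by
      gcongr
      exact (sq3_cross_le _ _).trans (by gcongr; exact sq3_nonneg _)
    _ = τ ^ 2 * sq3 d * sq3 (a - b) := by ring

open Finset

section Grid

variable {M : ℕ} [NeZero M]

lemma sum_sq3_Dm_le (h : ℝ) (u : (Fin 3 → ZMod M) → Fin 3 → ℝ) :
    ∑ i, ∑ j, sq3 (Dm h u j i) ≤ 12 / h ^ 2 * ∑ i, sq3 (u i) := by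
  have shift (j : Fin 3) : ∑ i, sq3 (u (i - Pi.single j 1)) = ∑ i, sq3 (u i) :=
    Fintype.sum_equiv (Equiv.subRight (Pi.single j 1)) _ _ fun _ => rfl
  calc ∑ i, ∑ j, sq3 (Dm h u j i)
      ≤ ∑ i, ∑ j, h⁻¹ ^ 2 * (2 * sq3 (u i) + 2 * sq3 (u (i - Pi.single j 1))) := by
        gcongr with i _ j _
        rw [Dm, sq3_smul]
        exact mul_le_mul_of_nonneg_left (sq3_sub_le _ _) (sq_nonneg _)
    _ = ∑ j : Fin 3, h⁻¹ ^ 2 * (4 * ∑ i, sq3 (u i)) := by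
        rw [sum_comm]
        refine sum_congr rfl fun j _ => ?_
        rw [← mul_sum, sum_add_distrib, ← mul_sum, ← mul_sum, shift]
        ring
    _ = 12 / h ^ 2 * ∑ i, sq3 (u i) := by
        rw [sum_const, card_univ, Fintype.card_fin, nsmul_eq_mul]
        field_simp
        ring

lemma gradnorm_le {h : ℝ} (hh : 0 ≤ h) (u : (Fin 3 → ZMod M) → Fin 3 → ℝ) :
    gradnorm h u ≤ 2 * √3 / h * l2norm h u := by
  have hS : 0 ≤ h ^ 3 * ∑ i, sq3 (u i) :=
    mul_nonneg (pow_nonneg hh 3) (sum_nonneg fun i _ => sq3_nonneg (u i))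
  calc gradnorm h u = √(h ^ 3 * ∑ i, ∑ j, sq3 (Dm h u j i)) := rfl
    _ ≤ √((2 * √3 / h) ^ 2 * (h ^ 3 * ∑ i, sq3 (u i))) := by
        refine Real.sqrt_le_sqrt ?_
        calc h ^ 3 * ∑ i, ∑ j, sq3 (Dm h u j i) ≤ h ^ 3 * (12 / h ^ 2 * ∑ i, sq3 (u i)) := by
              gcongr
              exact sum_sq3_Dm_le h u
          _ = (2 * √3 / h) ^ 2 * (h ^ 3 * ∑ i, sq3 (u i)) := by
              rw [div_pow, mul_pow, Real.sq_sqrt (by norm_num)]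
              ring
    _ = 2 * √3 / h * l2norm h u := by
        rw [Real.sqrt_mul' _ hS, Real.sqrt_sq (by positivity)]
        rfl

lemma l2norm_le_of_sq3_le {h c : ℝ} (hh : 0 ≤ h) (hc : 0 ≤ c)
    {u v : (Fin 3 → ZMod M) → Fin 3 → ℝ} (huv : ∀ i, sq3 (u i) ≤ c ^ 2 * sq3 (v i)) :
    l2norm h u ≤ c * l2norm h v := by
  have hS : 0 ≤ h ^ 3 * ∑ i, sq3 (v i) :=
    mul_nonneg (pow_nonneg hh 3) (sum_nonneg fun i _ => sq3_nonneg (v i))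
  calc l2norm h u = √(h ^ 3 * ∑ i, sq3 (u i)) := rfl
    _ ≤ √(c ^ 2 * (h ^ 3 * ∑ i, sq3 (v i))) := by
        refine Real.sqrt_le_sqrt ?_
        rw [mul_left_comm]
        gcongr
        rw [mul_sum]
        exact sum_le_sum fun i _ => huv i
    _ = c * l2norm h v := by
        rw [Real.sqrt_mul' _ hS, Real.sqrt_sq hc]
        rfl

end Grid

/-- There is `C > 0` such that for every grid, every
`Δt > 0`, every unit-length grid function `d`, and all `w, w₁, w₂`,
`‖∇_h(V_{Δt}((w+w₁)/2) d) − ∇_h(V_{Δt}((w+w₂)/2) d)‖ ≤ (C Δt/h) ‖w₁ − w₂‖`. -/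
theorem gradient_lipschitz_in_w :
    ∃ C > (0 : ℝ), ∀ (M : ℕ) [NeZero M], ∀ h Δt : ℝ, h = 1 / M → 0 < Δt →
      ∀ d w w₁ w₂ : (Fin 3 → ZMod M) → Fin 3 → ℝ, (∀ i, enorm3 (d i) = 1) →
        gradnorm h (fun i => Vmat Δt ((2 : ℝ)⁻¹ • (w i + w₁ i)) (d i)
            - Vmat Δt ((2 : ℝ)⁻¹ • (w i + w₂ i)) (d i))
          ≤ C * Δt / h * l2norm h (w₁ - w₂) := by
  refine ⟨√3, by positivity, fun M _ h Δt hh hΔt d w w₁ w₂ hd => ?_⟩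
  have hh0 : 0 ≤ h := by rw [hh]; positivity
  have pointwise (i : Fin 3 → ZMod M) :
      sq3 (Vmat Δt ((2 : ℝ)⁻¹ • (w i + w₁ i)) (d i) - Vmat Δt ((2 : ℝ)⁻¹ • (w i + w₂ i)) (d i))
        ≤ (Δt / 2) ^ 2 * sq3 ((w₁ - w₂) i) := by
    have hdi : sq3 (d i) = 1 := Real.sqrt_eq_one.mp (hd i)
    refine (sq3_Vmat_sub_Vmat_le _ _ _ _).trans_eq ?_
    rw [hdi, ← smul_sub, add_sub_add_left_eq_sub, sq3_smul, Pi.sub_apply]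
    ring
  calc _ ≤ 2 * √3 / h * l2norm h _ := gradnorm_le hh0 _
    _ ≤ 2 * √3 / h * (Δt / 2 * l2norm h (w₁ - w₂)) := by
        gcongr
        exact l2norm_le_of_sq3_le hh0 (by positivity) pointwise
    _ = √3 * Δt / h * l2norm h (w₁ - w₂) := by ring
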